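/- Fix an integer n ≥ 1, ρ ∈ (0,1), ω > 0, k > 0, μ₀ > 0, and set ε₀ = k²/μ₀. Assume h_n(2ω) ≠ 0 and j_n(kω) ≠ 0. Consider the 3×3 matrix A_n with rows (h_n(2ω), 0, j_n(2ω)), (ρ h_n(ωρ), −ε₀^{−1/2} j_n(kω), ρ j_n(ωρ)), (k 𝓗_n(ωρ), −μ₀^{−1/2} 𝒥_n(kω), k 𝒥_n(ωρ)) — the coefficient matrix of the boundary and transmission conditions for the n-th mode in the unknowns (c, α, γ). Then: (i) det A_n = 0 if and only if μ₀ j_n(kω) [𝒥_n(ωρ) h_n(2ω) − 𝓗_n(ωρ) j_n(2ω)] = ρ 𝒥_n(kω) [j_n(ωρ) h_n(2ω) − h_n(ωρ) j_n(2ω)]; (ii) if this cloak-busting relation holds and in addition ρ μ₀^{−1/2} h_n(ωρ) 𝒥_n(kω) − μ₀^{1/2} 𝓗_n(ωρ) j_n(kω) ≠ 0, then for every f ≠ 0 the inhomogeneous system A_n (c, α, γ)ᵀ = (f, 0, 0)ᵀ has no solution. -/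

import Mathlib

/-! Only the relations `k ε₀^{-1/2} = μ₀ μ₀^{-1/2} = μ₀^{1/2}` between the entries of `A_n` matter.
With them, expanding `det A_n` along its first row gives `μ₀^{-1/2}` times the difference of the
two sides of the cloak-busting relation. For (ii), `adj(A) A = det A · I = 0`, so a solution of
`A v = f e₀` forces `f · adj(A)₂₀ = 0`, and `adj(A)₂₀` is, up to sign,
`ρ μ₀^{-1/2} h_n(ωρ) 𝒥_n(kω) − μ₀^{1/2} 𝓗_n(ωρ) j_n(kω)`. -/

/-- The operator `f ↦ (z ↦ f′(z)/z)` used in the Rayleigh formulas. -/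
noncomputable def sphDOp (f : ℂ → ℂ) : ℂ → ℂ := fun z => deriv f z / z

/-- Spherical Bessel function of the first kind:
`j_n(z) = (−z)^n (z⁻¹ d/dz)^n (sin z / z)`. -/
noncomputable def sbj (n : ℕ) (z : ℂ) : ℂ :=
  (-z) ^ n * sphDOp^[n] (fun w => Complex.sin w / w) z

/-- Spherical Bessel function of the second kind:
`y_n(z) = −(−z)^n (z⁻¹ d/dz)^n (cos z / z)`. -/
noncomputable def sby (n : ℕ) (z : ℂ) : ℂ :=
  -((-z) ^ n * sphDOp^[n] (fun w => Complex.cos w / w) z)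

/-- Spherical Hankel function of the first kind `h_n = j_n + i y_n`. -/
noncomputable def sbh (n : ℕ) (z : ℂ) : ℂ := sbj n z + Complex.I * sby n z

/-- `𝒥_n(z) = j_n(z) + z j_n′(z)`. -/
noncomputable def sbJ (n : ℕ) (z : ℂ) : ℂ := sbj n z + z * deriv (sbj n) z

/-- `𝓗_n(z) = h_n(z) + z h_n′(z)`. -/
noncomputable def sbH (n : ℕ) (z : ℂ) : ℂ := sbh n z + z * deriv (sbh n) z

/-- `x^{−1/2}` for a positive real `x`, as a complex number. -/
noncomputable def invSqrtC (x : ℝ) : ℂ := ((Real.sqrt x)⁻¹ : ℝ)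

/-- `g(ρ) = O(ρ^s)` as `ρ → 0⁺`. -/
def IsBigORho (g : ℝ → ℂ) (s : ℝ) : Prop :=
  ∃ C : ℝ, 0 < C ∧ ∃ δ : ℝ, 0 < δ ∧
    ∀ ρ : ℝ, 0 < ρ → ρ < δ → ‖g ρ‖ ≤ C * ρ ^ s

theorem Matrix.mulVec_ne_single_of_det_eq_zero {n R : Type*} [Fintype n] [DecidableEq n]
    [CommRing R] [NoZeroDivisors R] {A : Matrix n n R} (hdet : A.det = 0) {i j : n}
    (hadj : A.adjugate j i ≠ 0) {f : R} (hf : f ≠ 0) (v : n → R) :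
    A.mulVec v ≠ Pi.single i f := by
  intro hv
  have hzero : A.adjugate.mulVec (A.mulVec v) = 0 := by
    rw [Matrix.mulVec_mulVec, Matrix.adjugate_mul, hdet, zero_smul, Matrix.zero_mulVec]
  have hentry := congrFun hzero j
  rw [hv, Matrix.mulVec_single] at hentry
  exact mul_ne_zero hadj hf hentry

theorem ofReal_mul_invSqrtC (x : ℝ) : (x : ℂ) * invSqrtC x = (√x : ℝ) := by
  unfold invSqrtC
  norm_cast
  rcases le_or_gt x 0 with hx | hx
  · simp [Real.sqrt_eq_zero'.mpr hx]
  · rw [← div_eq_mul_inv, Real.div_sqrt]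

theorem ofReal_mul_invSqrtC_sq_div {k : ℝ} (hk : 0 < k) (x : ℝ) :
    (k : ℂ) * invSqrtC (k ^ 2 / x) = (√x : ℝ) := by
  unfold invSqrtC
  norm_cast
  rw [Real.sqrt_div (sq_nonneg k), Real.sqrt_sq hk.le, inv_div, mul_div_cancel₀ _ hk.ne']

theorem invSqrtC_ne_zero {x : ℝ} (hx : 0 < x) : invSqrtC x ≠ 0 := by
  unfold invSqrtC
  exact_mod_cast inv_ne_zero (Real.sqrt_pos.mpr hx).ne'

section ModeMatrix

variable {R : Type*} [CommRing R] (a b ρ p q k P Q s J t J' μ m : R)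

-- The paper's `A_n` with `a, b = h_n, j_n (2ω)`, `p, q = h_n, j_n (ωρ)`, `P, Q = 𝓗_n, 𝒥_n (ωρ)`,
-- `J, J' = j_n, 𝒥_n (kω)` and `s, t = ε₀^{-1/2}, μ₀^{-1/2}`.
def modeMatrix : Matrix (Fin 3) (Fin 3) R :=
  Matrix.of ![![a, 0, b], ![ρ * p, -(s * J), ρ * q], ![k * P, -(t * J'), k * Q]]

variable {a b ρ p q k P Q s J t J' μ m}

theorem det_modeMatrix (hks : k * s = m) (hμt : μ * t = m) :
    (modeMatrix a b ρ p q k P Q s J t J').det =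
      t * (ρ * J' * (q * a - p * b) - μ * J * (Q * a - P * b)) := by
  rw [modeMatrix, Matrix.det_fin_three]
  simp only [Matrix.of_apply, Matrix.cons_val', Matrix.cons_val_zero, Matrix.cons_val_one,
    Matrix.cons_val, Matrix.cons_val_fin_one]
  linear_combination (J * (P * b - Q * a)) * (hks - hμt)

theorem adjugate_modeMatrix_two_zero (hks : k * s = m) :
    (modeMatrix a b ρ p q k P Q s J t J').adjugate 2 0 = -(ρ * t * p * J' - m * P * J) := by
  rw [modeMatrix, Matrix.adjugate_fin_three]
  simp only [Matrix.of_apply, Matrix.cons_val', Matrix.cons_val_zero, Matrix.cons_val_one,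
    Matrix.cons_val, Matrix.cons_val_fin_one]
  linear_combination J * P * hks

variable [NoZeroDivisors R]

theorem det_modeMatrix_eq_zero_iff (hks : k * s = m) (hμt : μ * t = m) (ht : t ≠ 0) :
    (modeMatrix a b ρ p q k P Q s J t J').det = 0 ↔
      μ * J * (Q * a - P * b) = ρ * J' * (q * a - p * b) := by
  rw [det_modeMatrix hks hμt, mul_eq_zero, or_iff_right ht, sub_eq_zero, eq_comm]

theorem modeMatrix_mulVec_ne_of_resonant (hks : k * s = m) (hμt : μ * t = m) (ht : t ≠ 0)
    (hrel : μ * J * (Q * a - P * b) = ρ * J' * (q * a - p * b))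
    (hD : ρ * t * p * J' - m * P * J ≠ 0) {f : R} (hf : f ≠ 0) (v : Fin 3 → R) :
    (modeMatrix a b ρ p q k P Q s J t J').mulVec v ≠ ![f, 0, 0] := by
  have hsingle : ![f, 0, 0] = Pi.single (0 : Fin 3) f := by
    ext i
    fin_cases i <;> rfl
  rw [hsingle]
  refine Matrix.mulVec_ne_single_of_det_eq_zero
    ((det_modeMatrix_eq_zero_iff hks hμt ht).2 hrel) (j := 2) ?_ hf v
  rw [adjugate_modeMatrix_two_zero hks]
  exact neg_ne_zero.2 hD

end ModeMatrix

theorem cloak_busting_inclusions_general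
    (n : ℕ) (ρ ω k μ₀ : ℝ)
    (hk : 0 < k) (hμ : 0 < μ₀)
    (ε₀ : ℝ) (hε : ε₀ = k ^ 2 / μ₀)
    (A : Matrix (Fin 3) (Fin 3) ℂ)
    (hA : A = Matrix.of
      ![![sbh n ((2 * ω : ℝ) : ℂ), 0, sbj n ((2 * ω : ℝ) : ℂ)],
        ![(ρ : ℂ) * sbh n ((ω * ρ : ℝ) : ℂ), -(invSqrtC ε₀ * sbj n ((k * ω : ℝ) : ℂ)),
          (ρ : ℂ) * sbj n ((ω * ρ : ℝ) : ℂ)],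
        ![(k : ℂ) * sbH n ((ω * ρ : ℝ) : ℂ), -(invSqrtC μ₀ * sbJ n ((k * ω : ℝ) : ℂ)),
          (k : ℂ) * sbJ n ((ω * ρ : ℝ) : ℂ)]]) :
    (A.det = 0 ↔
      (μ₀ : ℂ) * sbj n ((k * ω : ℝ) : ℂ) *
          (sbJ n ((ω * ρ : ℝ) : ℂ) * sbh n ((2 * ω : ℝ) : ℂ)
            - sbH n ((ω * ρ : ℝ) : ℂ) * sbj n ((2 * ω : ℝ) : ℂ))
        = (ρ : ℂ) * sbJ n ((k * ω : ℝ) : ℂ) *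
          (sbj n ((ω * ρ : ℝ) : ℂ) * sbh n ((2 * ω : ℝ) : ℂ)
            - sbh n ((ω * ρ : ℝ) : ℂ) * sbj n ((2 * ω : ℝ) : ℂ))) ∧
    (((μ₀ : ℂ) * sbj n ((k * ω : ℝ) : ℂ) *
          (sbJ n ((ω * ρ : ℝ) : ℂ) * sbh n ((2 * ω : ℝ) : ℂ)
            - sbH n ((ω * ρ : ℝ) : ℂ) * sbj n ((2 * ω : ℝ) : ℂ))
        = (ρ : ℂ) * sbJ n ((k * ω : ℝ) : ℂ) *
          (sbj n ((ω * ρ : ℝ) : ℂ) * sbh n ((2 * ω : ℝ) : ℂ)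
            - sbh n ((ω * ρ : ℝ) : ℂ) * sbj n ((2 * ω : ℝ) : ℂ))) →
      ((ρ : ℂ) * invSqrtC μ₀ * sbh n ((ω * ρ : ℝ) : ℂ) * sbJ n ((k * ω : ℝ) : ℂ)
          - ((Real.sqrt μ₀ : ℝ) : ℂ) * sbH n ((ω * ρ : ℝ) : ℂ) * sbj n ((k * ω : ℝ) : ℂ)
            ≠ 0) →
      ∀ f : ℂ, f ≠ 0 → ¬ ∃ v : Fin 3 → ℂ, A.mulVec v = ![f, 0, 0]) := by
  subst hε hA
  have hks := ofReal_mul_invSqrtC_sq_div hk μ₀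
  have hμt := ofReal_mul_invSqrtC μ₀
  have ht := invSqrtC_ne_zero hμ
  exact ⟨det_modeMatrix_eq_zero_iff hks hμt ht,
    fun hrel hD f hf ⟨v, hv⟩ => modeMatrix_mulVec_ne_of_resonant hks hμt ht hrel hD hf v hv⟩

/-- Cloak-busting inclusions: the coefficient matrix `A_n` of the
mode-`n` boundary/transmission system is singular iff
`μ₀ j_n(kω)[𝒥_n(ωρ)h_n(2ω) − 𝓗_n(ωρ)j_n(2ω)] = ρ 𝒥_n(kω)[j_n(ωρ)h_n(2ω) − h_n(ωρ)j_n(2ω)]`;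
and if this relation holds together with
`ρ μ₀^{−1/2} h_n(ωρ)𝒥_n(kω) − μ₀^{1/2} 𝓗_n(ωρ)j_n(kω) ≠ 0`, then for every `f ≠ 0`
the inhomogeneous system `A_n (c,α,γ)ᵀ = (f,0,0)ᵀ` has no solution. -/
theorem cloak_busting_inclusions
    (n : ℕ) (hn : 1 ≤ n) (ρ ω k μ₀ : ℝ)
    (hρ0 : 0 < ρ) (hρ1 : ρ < 1) (hω : 0 < ω) (hk : 0 < k) (hμ : 0 < μ₀)
    (ε₀ : ℝ) (hε : ε₀ = k ^ 2 / μ₀)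
    (hh2 : sbh n ((2 * ω : ℝ) : ℂ) ≠ 0) (hjk : sbj n ((k * ω : ℝ) : ℂ) ≠ 0)
    (A : Matrix (Fin 3) (Fin 3) ℂ)
    (hA : A = Matrix.of
      ![![sbh n ((2 * ω : ℝ) : ℂ), 0, sbj n ((2 * ω : ℝ) : ℂ)],
        ![(ρ : ℂ) * sbh n ((ω * ρ : ℝ) : ℂ), -(invSqrtC ε₀ * sbj n ((k * ω : ℝ) : ℂ)),
          (ρ : ℂ) * sbj n ((ω * ρ : ℝ) : ℂ)],
        ![(k : ℂ) * sbH n ((ω * ρ : ℝ) : ℂ), -(invSqrtC μ₀ * sbJ n ((k * ω : ℝ) : ℂ)),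
          (k : ℂ) * sbJ n ((ω * ρ : ℝ) : ℂ)]]) :
    (A.det = 0 ↔
      (μ₀ : ℂ) * sbj n ((k * ω : ℝ) : ℂ) *
          (sbJ n ((ω * ρ : ℝ) : ℂ) * sbh n ((2 * ω : ℝ) : ℂ)
            - sbH n ((ω * ρ : ℝ) : ℂ) * sbj n ((2 * ω : ℝ) : ℂ))
        = (ρ : ℂ) * sbJ n ((k * ω : ℝ) : ℂ) *
          (sbj n ((ω * ρ : ℝ) : ℂ) * sbh n ((2 * ω : ℝ) : ℂ)
            - sbh n ((ω * ρ : ℝ) : ℂ) * sbj n ((2 * ω : ℝ) : ℂ))) ∧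
    (((μ₀ : ℂ) * sbj n ((k * ω : ℝ) : ℂ) *
          (sbJ n ((ω * ρ : ℝ) : ℂ) * sbh n ((2 * ω : ℝ) : ℂ)
            - sbH n ((ω * ρ : ℝ) : ℂ) * sbj n ((2 * ω : ℝ) : ℂ))
        = (ρ : ℂ) * sbJ n ((k * ω : ℝ) : ℂ) *
          (sbj n ((ω * ρ : ℝ) : ℂ) * sbh n ((2 * ω : ℝ) : ℂ)
            - sbh n ((ω * ρ : ℝ) : ℂ) * sbj n ((2 * ω : ℝ) : ℂ))) →
      ((ρ : ℂ) * invSqrtC μ₀ * sbh n ((ω * ρ : ℝ) : ℂ) * sbJ n ((k * ω : ℝ) : ℂ)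
          - ((Real.sqrt μ₀ : ℝ) : ℂ) * sbH n ((ω * ρ : ℝ) : ℂ) * sbj n ((k * ω : ℝ) : ℂ)
            ≠ 0) →
      ∀ f : ℂ, f ≠ 0 → ¬ ∃ v : Fin 3 → ℂ, A.mulVec v = ![f, 0, 0]) :=
  cloak_busting_inclusions_general n ρ ω k μ₀ hk hμ ε₀ hε A hA
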